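/- Let Φ ∈ S₂(E, E_*) and V : H_Φ → K_Φ the canonical isometry. Then the kernel of V* equals {(0, g) ∈ K_Φ : g ∈ (L²⊖H²(E)) ∩ Δ L²(E)}, and as sets H_Φ = {f ∈ H²(E_*) : there exists g with (f, g) ∈ K_Φ}. -/

import Mathlib

/-!
`S` is a self-adjoint square root of `[[1, Φ], [Φ*, 1]]` and `ℋ = range S` carries the range
norm, so `ipW p (S (S w)) = ⟪p, w⟫` for `p ∈ ℋ`. Both `V (D² h) = P_Φ (j h, Φ* j h)` and
`(0, Δ² y)` are of the form `S (S w)`, with `w = (j h, -P₊ Φ* j h)` and `w = (-Φ y, y)`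
respectively, whence `‖S w‖ = ‖D h‖`, resp. `‖S w‖ = ‖Δ y‖`. For `p = S x ∈ K_Φ` this gives
`ipW p (V (D² h)) = ⟪c1 p, j h⟫`, and, once `c1 p = 0`, `|⟪c2 p, y⟫| = |⟪x, S w⟫| ≤ ‖x‖ ‖Δ y‖`;
Douglas' criterion puts `c2 p` in the range of `Δ`, and in the same way the first component of
an element of `K_Φ` in `j (range D)`. Conversely, `D h ↦ S w` is isometric, hence extends to the
closure of `range D`, which contains a preimage `v` of `D x` under `D`; applying `S` to the image
of `v` gives an element of `K_Φ` with first component `j (D x)`.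
-/

open scoped ComplexInnerProductSpace

noncomputable def c1 {A B : Type*} [NormedAddCommGroup A] [NormedAddCommGroup B]
    (x : WithLp 2 (A × B)) : A := (WithLp.equiv 2 (A × B) x).1

noncomputable def c2 {A B : Type*} [NormedAddCommGroup A] [NormedAddCommGroup B]
    (x : WithLp 2 (A × B)) : B := (WithLp.equiv 2 (A × B) x).2

noncomputable def pr {A B : Type*} [NormedAddCommGroup A] [NormedAddCommGroup B]
    (f : A) (g : B) : WithLp 2 (A × B) := (WithLp.equiv 2 (A × B)).symm (f, g)

open scoped InnerProduct

section Hilbert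

variable {𝕜 E F : Type*} [RCLike 𝕜]
  [NormedAddCommGroup E] [InnerProductSpace 𝕜 E] [CompleteSpace E]
  [NormedAddCommGroup F] [InnerProductSpace 𝕜 F]

theorem ContinuousLinearMap.exists_mem_orthogonal_ker_apply_eq (T : E →L[𝕜] F) (x : E) :
    ∃ x' ∈ T.kerᗮ, T x' = T x := by
  have : CompleteSpace T.ker := T.isClosed_ker.completeSpace_coe
  refine ⟨x - T.ker.starProjection x, T.ker.sub_starProjection_mem_orthogonal x, ?_⟩
  rw [map_sub, sub_eq_self]
  exact T.ker.starProjection_apply_mem x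

theorem IsSelfAdjoint.inner_apply_left {T : E →L[𝕜] E} (hT : IsSelfAdjoint T)
    (x y : E) : inner 𝕜 (T x) y = inner 𝕜 x (T y) :=
  hT.isSymmetric x y

/-- Douglas' range inclusion criterion, for a single vector. -/
theorem ContinuousLinearMap.mem_range_of_norm_inner_le [CompleteSpace F] (T : E →L[𝕜] F)
    {g : F} {C : ℝ} (hg : ∀ y, ‖inner 𝕜 g y‖ ≤ C * ‖(T†) y‖) : g ∈ Set.range T := by
  set A : F →ₗ[𝕜] E := (T† : F →ₗ[𝕜] E)
  have hker : LinearMap.ker A ≤ LinearMap.ker (innerₛₗ 𝕜 g) := fun y hy => by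
    have := hg y
    simp_all [A]
  let φ₀ : LinearMap.range A →ₗ[𝕜] 𝕜 :=
    (LinearMap.ker A).liftQ (innerₛₗ 𝕜 g) hker ∘ₗ A.quotKerEquivRange.symm.toLinearMap
  have hφ₀ : ∀ y, φ₀ ⟨A y, y, rfl⟩ = inner 𝕜 g y := fun y => by
    simp only [φ₀, LinearMap.comp_apply, LinearEquiv.coe_coe,
      A.quotKerEquivRange_symm_apply_image y ⟨y, rfl⟩]
    rfl
  have hbound : ∀ v, ‖φ₀ v‖ ≤ C * ‖v‖ := by
    rintro ⟨_, y, rfl⟩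
    exact (hφ₀ y).symm ▸ hg y
  obtain ⟨φ, hφ, -⟩ := exists_extension_norm_eq _ (φ₀.mkContinuous C hbound)
  refine ⟨(InnerProductSpace.toDual 𝕜 E).symm φ, ext_inner_right 𝕜 fun y => ?_⟩
  rw [← ContinuousLinearMap.adjoint_inner_right, InnerProductSpace.toDual_symm_apply]
  exact (hφ ⟨A y, y, rfl⟩).trans (hφ₀ y)

theorem IsSelfAdjoint.norm_apply_eq_of_inner_eq [CompleteSpace F] {S : E →L[𝕜] E}
    {T : F →L[𝕜] F} (hS : IsSelfAdjoint S) (hT : IsSelfAdjoint T) {u : E} {y : F}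
    (h : inner 𝕜 u (S (S u)) = inner 𝕜 y (T (T y))) : ‖S u‖ = ‖T y‖ := by
  rw [← sq_eq_sq₀ (norm_nonneg _) (norm_nonneg _), ← inner_self_eq_norm_sq (𝕜 := 𝕜),
    ← inner_self_eq_norm_sq (𝕜 := 𝕜), hS.inner_apply_left, hT.inner_apply_left, h]

/-- `hip` says that `ip` is the inner product of the operator range of `S`. -/
theorem IsSelfAdjoint.rangeInner_apply_apply {S : E →L[𝕜] E} (hS : IsSelfAdjoint S)
    {ip : E → E → 𝕜} (hip : ∀ x y, x ∈ S.kerᗮ → ip (S x) (S y) = inner 𝕜 x y)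
    {p : E} (hp : p ∈ Set.range S) (w : E) : ip p (S (S w)) = inner 𝕜 p w := by
  obtain ⟨x, rfl⟩ := hp
  obtain ⟨x', hx', hSx'⟩ := S.exists_mem_orthogonal_ker_apply_eq x
  rw [← hSx', hip x' _ hx', hS.inner_apply_left]

end Hilbert

theorem exists_mem_closure_graph_of_norm_eq {𝕜 E F G : Type*} [NontriviallyNormedField 𝕜]
    [SeminormedAddCommGroup E] [SeminormedAddCommGroup F] [NormedAddCommGroup G]
    [CompleteSpace G] [NormedSpace 𝕜 E] [NormedSpace 𝕜 F] [NormedSpace 𝕜 G]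
    (A : E →L[𝕜] F) (B : E →L[𝕜] G) (hAB : ∀ h, ‖B h‖ = ‖A h‖) {v : F}
    (hv : v ∈ closure (Set.range A)) :
    ∃ u, (v, u) ∈ closure (Set.range fun h => (A h, B h)) := by
  obtain ⟨s, hs, hlim⟩ := mem_closure_iff_seq_limit.mp hv
  choose h hh using hs
  have hdist : ∀ n m, dist (B (h n)) (B (h m)) = dist (s n) (s m) := fun n m => by
    rw [dist_eq_norm, dist_eq_norm, ← map_sub, hAB, map_sub, hh, hh]
  have hcauchy : CauchySeq (B ∘ h) := by
    have := hlim.cauchySeq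
    rw [Metric.cauchySeq_iff] at this ⊢
    simpa only [Function.comp_apply, hdist] using this
  obtain ⟨u, hu⟩ := cauchySeq_tendsto_of_complete hcauchy
  refine ⟨u, mem_closure_of_tendsto (hlim.prodMk_nhds hu)
    (Filter.Eventually.of_forall fun n => ⟨h n, ?_⟩)⟩
  simp [hh]

section ProductSpace

variable {A B : Type*} [NormedAddCommGroup A] [NormedAddCommGroup B]

@[simp] theorem c1_pr (a : A) (b : B) : c1 (pr a b) = a := rfl

@[simp] theorem c2_pr (a : A) (b : B) : c2 (pr a b) = b := rfl

theorem pr_c1_c2 (p : WithLp 2 (A × B)) : pr (c1 p) (c2 p) = p := rfl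

theorem inner_pr_right [InnerProductSpace ℂ A] [InnerProductSpace ℂ B] (p : WithLp 2 (A × B))
    (a : A) (b : B) : ⟪p, pr a b⟫ = ⟪c1 p, a⟫ + ⟪c2 p, b⟫ := rfl

theorem continuous_c1 [NormedSpace ℂ A] [NormedSpace ℂ B] :
    Continuous (c1 : WithLp 2 (A × B) → A) :=
  continuous_fst.comp (WithLp.prodContinuousLinearEquiv 2 ℂ A B).continuous

theorem continuous_c2 [NormedSpace ℂ A] [NormedSpace ℂ B] :
    Continuous (c2 : WithLp 2 (A × B) → B) :=
  continuous_snd.comp (WithLp.prodContinuousLinearEquiv 2 ℂ A B).continuous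

end ProductSpace

section Scattering

variable {L2E L2Es H2 : Type*}
  [NormedAddCommGroup L2E] [InnerProductSpace ℂ L2E] [CompleteSpace L2E]
  [NormedAddCommGroup L2Es] [InnerProductSpace ℂ L2Es] [CompleteSpace L2Es]
  [NormedAddCommGroup H2] [InnerProductSpace ℂ H2]
  {MΦ : L2E →L[ℂ] L2Es} {S : WithLp 2 (L2Es × L2E) →L[ℂ] WithLp 2 (L2Es × L2E)}
  {PpE : L2E →L[ℂ] L2E} {PpEs : L2Es →L[ℂ] L2Es} {Δ : L2E →L[ℂ] L2E}
  {j : H2 →L[ℂ] L2Es} {D : H2 →L[ℂ] H2}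

theorem apply_apply_pr_j
    (hS2 : ∀ f g, S (S (pr f g)) = pr (f + MΦ g) ((MΦ†) f + g))
    (hMΦH2 : ∀ h, PpEs (MΦ (PpE h)) = MΦ (PpE h))
    (hDj : ∀ h, j (D (D h)) = j h - PpEs (MΦ (PpE ((MΦ†) (j h))))) (h : H2) :
    S (S (pr (j h) (-PpE ((MΦ†) (j h))))) =
      pr (j (D (D h))) ((MΦ†) (j h) - PpE ((MΦ†) (j h))) := by
  rw [hS2, hDj, hMΦH2, map_neg, ← sub_eq_add_neg, ← sub_eq_add_neg]

theorem PΦ_pr_j_eq_apply_apply {PΦ : WithLp 2 (L2Es × L2E) →L[ℂ] WithLp 2 (L2Es × L2E)}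
    (hS2 : ∀ f g, S (S (pr f g)) = pr (f + MΦ g) ((MΦ†) f + g))
    (hMΦH2 : ∀ h, PpEs (MΦ (PpE h)) = MΦ (PpE h))
    (hDj : ∀ h, j (D (D h)) = j h - PpEs (MΦ (PpE ((MΦ†) (j h)))))
    (hPΦ : ∀ f g, PΦ (pr f g) = pr (PpEs f - MΦ (PpE g)) ((g - PpE g) - (MΦ†) (f - PpEs f)))
    (hPj : ∀ h, PpEs (j h) = j h) (h : H2) :
    PΦ (pr (j h) ((MΦ†) (j h))) = S (S (pr (j h) (-PpE ((MΦ†) (j h))))) := by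
  rw [hPΦ, hPj, sub_self, map_zero, sub_zero, apply_apply_pr_j hS2 hMΦH2 hDj, hDj, hMΦH2]

theorem norm_apply_pr_j [CompleteSpace H2] (hS : IsSelfAdjoint S) (hD : IsSelfAdjoint D)
    (hS2 : ∀ f g, S (S (pr f g)) = pr (f + MΦ g) ((MΦ†) f + g))
    (hPpE : IsSelfAdjoint PpE) (hPpE2 : PpE ∘L PpE = PpE)
    (hMΦH2 : ∀ h, PpEs (MΦ (PpE h)) = MΦ (PpE h))
    (hj : ∀ x y, ⟪j x, j y⟫ = ⟪x, y⟫)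
    (hDj : ∀ h, j (D (D h)) = j h - PpEs (MΦ (PpE ((MΦ†) (j h))))) (h : H2) :
    ‖S (pr (j h) (-PpE ((MΦ†) (j h))))‖ = ‖D h‖ := by
  refine hS.norm_apply_eq_of_inner_eq hD ?_
  have hproj : ∀ z, ⟪PpE z, z - PpE z⟫ = 0 := fun z => by
    have hidem : PpE (PpE z) = PpE z := congr($hPpE2 z)
    rw [inner_sub_right, sub_eq_zero, hPpE.inner_apply_left, hPpE.inner_apply_left, hidem]
  rw [apply_apply_pr_j hS2 hMΦH2 hDj, inner_pr_right, c1_pr, c2_pr, hj, inner_neg_left, hproj,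
    neg_zero, add_zero]

theorem apply_apply_pr_neg (hS2 : ∀ f g, S (S (pr f g)) = pr (f + MΦ g) ((MΦ†) f + g))
    (hΔ2 : Δ ∘L Δ = 1 - MΦ† ∘L MΦ) (y : L2E) : S (S (pr (-MΦ y) y)) = pr 0 (Δ (Δ y)) := by
  have hΔy : Δ (Δ y) = y - (MΦ†) (MΦ y) := congr($hΔ2 y)
  rw [hS2, hΔy, neg_add_cancel, map_neg, neg_add_eq_sub]

theorem norm_apply_pr_neg (hS : IsSelfAdjoint S) (hΔ : IsSelfAdjoint Δ)
    (hS2 : ∀ f g, S (S (pr f g)) = pr (f + MΦ g) ((MΦ†) f + g))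
    (hΔ2 : Δ ∘L Δ = 1 - MΦ† ∘L MΦ) (y : L2E) : ‖S (pr (-MΦ y) y)‖ = ‖Δ y‖ := by
  refine hS.norm_apply_eq_of_inner_eq hΔ ?_
  rw [apply_apply_pr_neg hS2 hΔ2, inner_pr_right, c1_pr, c2_pr, inner_zero_right, zero_add]

theorem c2_mem_range_of_c1_eq_zero (hS : IsSelfAdjoint S) (hΔ : IsSelfAdjoint Δ)
    (hS2 : ∀ f g, S (S (pr f g)) = pr (f + MΦ g) ((MΦ†) f + g))
    (hΔ2 : Δ ∘L Δ = 1 - MΦ† ∘L MΦ) {p : WithLp 2 (L2Es × L2E)} (hp : p ∈ Set.range S)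
    (hp1 : c1 p = 0) : c2 p ∈ Set.range Δ := by
  obtain ⟨x, rfl⟩ := hp
  refine Δ.mem_range_of_norm_inner_le (C := ‖x‖) fun y => ?_
  have hxy : ⟪c2 (S x), y⟫ = ⟪x, S (pr (-MΦ y) y)⟫ := by
    rw [← hS.inner_apply_left, inner_pr_right, hp1, inner_zero_left, zero_add]
  rw [hΔ.adjoint_eq, hxy, ← norm_apply_pr_neg hS hΔ hS2 hΔ2 y]
  exact norm_inner_le_norm _ _

theorem exists_j_D_eq_of_pr_mem_range [CompleteSpace H2] (hS : IsSelfAdjoint S)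
    (hD : IsSelfAdjoint D) (hS2 : ∀ f g, S (S (pr f g)) = pr (f + MΦ g) ((MΦ†) f + g))
    (hPpE : IsSelfAdjoint PpE) (hPpE2 : PpE ∘L PpE = PpE)
    (hMΦH2 : ∀ h, PpEs (MΦ (PpE h)) = MΦ (PpE h))
    (hj : ∀ x y, ⟪j x, j y⟫ = ⟪x, y⟫) (hjrange : Set.range j = Set.range PpEs)
    (hDj : ∀ h, j (D (D h)) = j h - PpEs (MΦ (PpE ((MΦ†) (j h))))) {f : L2Es} {g : L2E}
    (hfg : pr f g ∈ Set.range S) (hf : PpEs f = f) (hg : PpE g = 0) : ∃ x, j (D x) = f := by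
  obtain ⟨y, rfl⟩ : f ∈ Set.range j := hjrange ▸ ⟨f, hf⟩
  obtain ⟨z, hz⟩ := hfg
  suffices y ∈ Set.range D from this.imp fun x hx => by rw [hx]
  refine D.mem_range_of_norm_inner_le (C := ‖z‖) fun h => ?_
  have hzh : ⟪y, h⟫ = ⟪z, S (pr (j h) (-PpE ((MΦ†) (j h))))⟫ := by
    rw [← hS.inner_apply_left, hz, inner_pr_right, c1_pr, c2_pr, hj, inner_neg_right,
      ← hPpE.inner_apply_left, hg, inner_zero_left, neg_zero, add_zero]
  rw [hD.adjoint_eq, hzh, ← norm_apply_pr_j hS hD hS2 hPpE hPpE2 hMΦH2 hj hDj h]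
  exact norm_inner_le_norm _ _

theorem exists_pr_j_D_mem_range [CompleteSpace H2] (hS : IsSelfAdjoint S)
    (hD : IsSelfAdjoint D) (hS2 : ∀ f g, S (S (pr f g)) = pr (f + MΦ g) ((MΦ†) f + g))
    (hPpE : IsSelfAdjoint PpE) (hPpE2 : PpE ∘L PpE = PpE)
    (hMΦH2 : ∀ h, PpEs (MΦ (PpE h)) = MΦ (PpE h)) (hj : ∀ x y, ⟪j x, j y⟫ = ⟪x, y⟫)
    (hDj : ∀ h, j (D (D h)) = j h - PpEs (MΦ (PpE ((MΦ†) (j h))))) (x : H2) :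
    ∃ g, pr (j (D x)) g ∈ Set.range S ∧ PpE g = 0 := by
  obtain ⟨v, hv, hDv⟩ := D.exists_mem_orthogonal_ker_apply_eq x
  rw [D.orthogonal_ker, hD.adjoint_eq] at hv
  let W : H2 →L[ℂ] WithLp 2 (L2Es × L2E) := S ∘L
    (WithLp.prodContinuousLinearEquiv 2 ℂ L2Es L2E).symm.toContinuousLinearMap ∘L
      j.prod (-(PpE ∘L MΦ† ∘L j))
  have hW : ∀ h, W h = S (pr (j h) (-PpE ((MΦ†) (j h)))) := fun h => rfl
  obtain ⟨u, hu⟩ := exists_mem_closure_graph_of_norm_eq D W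
    (fun h => by rw [hW, norm_apply_pr_j hS hD hS2 hPpE hPpE2 hMΦH2 hj hDj h])
    (by rwa [← SetLike.mem_coe, Submodule.topologicalClosure_coe, LinearMap.coe_range] at hv)
  set C : Set (H2 × WithLp 2 (L2Es × L2E)) :=
    {q | c1 (S q.2) = j (D q.1) ∧ PpE (c2 (S q.2)) = 0}
  have hclosed : IsClosed C :=
    (isClosed_eq (continuous_c1.comp (S.continuous.comp continuous_snd))
      ((j ∘L D).continuous.comp continuous_fst)).inter
    (isClosed_eq (PpE.continuous.comp (continuous_c2.comp (S.continuous.comp continuous_snd)))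
      continuous_const)
  have hgraph : Set.range (fun h => (D h, W h)) ⊆ C := by
    rintro _ ⟨h, rfl⟩
    have hidem : PpE (PpE ((MΦ†) (j h))) = PpE ((MΦ†) (j h)) := congr($hPpE2 _)
    simp only [C, Set.mem_ofPred_eq, hW, apply_apply_pr_j hS2 hMΦH2 hDj, c1_pr, c2_pr, map_sub,
      hidem, sub_self, and_self]
  obtain ⟨hu1, hu2⟩ := closure_minimal hgraph hclosed hu
  refine ⟨c2 (S u), ⟨u, ?_⟩, hu2⟩
  rw [← hDv, ← hu1, pr_c1_c2]

end Scattering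

theorem stmt_11_general {L2E L2Es H2 : Type*}
    [NormedAddCommGroup L2E] [InnerProductSpace ℂ L2E] [CompleteSpace L2E]
    [NormedAddCommGroup L2Es] [InnerProductSpace ℂ L2Es] [CompleteSpace L2Es]
    [NormedAddCommGroup H2] [InnerProductSpace ℂ H2] [CompleteSpace H2]
    (MΦ : L2E →L[ℂ] L2Es)
    (S : WithLp 2 (L2Es × L2E) →L[ℂ] WithLp 2 (L2Es × L2E))
    (hS : IsSelfAdjoint S)
    (hS2 : ∀ (f : L2Es) (g : L2E),
      S (S (pr f g)) = pr (f + MΦ g) (ContinuousLinearMap.adjoint MΦ f + g))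
    (PpE : L2E →L[ℂ] L2E) (hPpE : IsSelfAdjoint PpE) (hPpE2 : PpE ∘L PpE = PpE)
    (PpEs : L2Es →L[ℂ] L2Es) (hPpEs2 : PpEs ∘L PpEs = PpEs)
    (hMΦH2 : ∀ h : L2E, PpEs (MΦ (PpE h)) = MΦ (PpE h))
    -- Δ = (I − Φ*Φ)^{1/2} on L²(E):
    (Δ : L2E →L[ℂ] L2E) (hΔ : IsSelfAdjoint Δ)
    (hΔ2 : Δ ∘L Δ = 1 - ContinuousLinearMap.adjoint MΦ ∘L MΦ)
    -- j : H²(E_*) → L²(E_*), isometric with range H²(E_*):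
    (j : H2 →L[ℂ] L2Es)
    (hj : ∀ x y : H2, ⟪j x, j y⟫ = ⟪x, y⟫)
    (hjrange : Set.range j = Set.range PpEs)
    -- D = D_{Φ*}:
    (D : H2 →L[ℂ] H2) (hD : IsSelfAdjoint D)
    (hDj : ∀ h : H2, j (D (D h)) =
      j h - PpEs (MΦ (PpE (ContinuousLinearMap.adjoint MΦ (j h)))))
    -- P_Φ:
    (PΦ : WithLp 2 (L2Es × L2E) →L[ℂ] WithLp 2 (L2Es × L2E))
    (hPΦ : ∀ (f : L2Es) (g : L2E),
      PΦ (pr f g) = pr (PpEs f - MΦ (PpE g))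
        ((g - PpE g) - ContinuousLinearMap.adjoint MΦ (f - PpEs f)))
    -- the operator-range inner product of ℋ:
    (ipW : WithLp 2 (L2Es × L2E) → WithLp 2 (L2Es × L2E) → ℂ)
    (hipW : ∀ x y, x ∈ (LinearMap.ker (S : WithLp 2 (L2Es × L2E) →ₗ[ℂ] WithLp 2 (L2Es × L2E)))ᗮ → ipW (S x) (S y) = ⟪x, y⟫) :
    -- (1) ker V* = {(0,g) ∈ K_Φ : g ∈ (L²⊖H²(E)) ∩ ΔL²(E)}:
    (∀ p ∈ Set.range S, PpEs (c1 p) = c1 p → PpE (c2 p) = 0 →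
      ((∀ h : H2, ipW p (PΦ (pr (j h) (ContinuousLinearMap.adjoint MΦ (j h)))) = 0) ↔
        (c1 p = 0 ∧ c2 p ∈ Set.range Δ))) ∧
      -- (2) as sets, H_Φ = {f ∈ H²(E_*) : ∃ g with (f,g) ∈ K_Φ}:
      ∀ f : L2Es,
        ((∃ g : L2E, pr f g ∈ Set.range S ∧ PpEs f = f ∧ PpE g = 0) ↔
          ∃ x : H2, j (D x) = f) := by
  have hPj : ∀ h, PpEs (j h) = j h := fun h => by
    obtain ⟨f, hf⟩ : j h ∈ Set.range PpEs := hjrange ▸ ⟨h, rfl⟩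
    rw [← hf]
    exact congr($hPpEs2 f)
  refine ⟨fun p hp hp1 hp2 => ?_, fun f => ⟨fun ⟨g, hfg, hf, hg⟩ => ?_, ?_⟩⟩
  · have hV : ∀ h, ipW p (PΦ (pr (j h) ((MΦ†) (j h)))) = ⟪c1 p, j h⟫ := fun h => by
      rw [PΦ_pr_j_eq_apply_apply hS2 hMΦH2 hDj hPΦ hPj, hS.rangeInner_apply_apply hipW hp,
        inner_pr_right, inner_neg_right, ← hPpE.inner_apply_left, hp2, inner_zero_left, neg_zero,
        add_zero]
    have hc1 : (∀ h, ⟪c1 p, j h⟫ = 0) → c1 p = 0 := fun hperp => by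
      obtain ⟨y, hy⟩ : c1 p ∈ Set.range j := hjrange ▸ ⟨_, hp1⟩
      have hy0 := hperp y
      rw [← hy, hj, inner_self_eq_zero] at hy0
      rw [← hy, hy0, map_zero]
    simp_rw [hV]
    exact ⟨fun hperp => ⟨hc1 hperp, c2_mem_range_of_c1_eq_zero hS hΔ hS2 hΔ2 hp (hc1 hperp)⟩,
      fun ⟨hp1, _⟩ h => by rw [hp1, inner_zero_left]⟩
  · exact exists_j_D_eq_of_pr_mem_range hS hD hS2 hPpE hPpE2 hMΦH2 hj hjrange hDj hfg hf hg
  · rintro ⟨x, rfl⟩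
    obtain ⟨g, hg, hPg⟩ := exists_pr_j_D_mem_range hS hD hS2 hPpE hPpE2 hMΦH2 hj hDj x
    exact ⟨g, hg, hPj _, hPg⟩

theorem stmt_11 {L2E L2Es H2 : Type*}
    [NormedAddCommGroup L2E] [InnerProductSpace ℂ L2E] [CompleteSpace L2E]
    [NormedAddCommGroup L2Es] [InnerProductSpace ℂ L2Es] [CompleteSpace L2Es]
    [NormedAddCommGroup H2] [InnerProductSpace ℂ H2] [CompleteSpace H2]
    (MΦ : L2E →L[ℂ] L2Es) (hMΦ : ‖MΦ‖ ≤ 1)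
    (S : WithLp 2 (L2Es × L2E) →L[ℂ] WithLp 2 (L2Es × L2E))
    (hS : IsSelfAdjoint S) (hSpos : ∀ x, 0 ≤ (⟪S x, x⟫).re)
    (hS2 : ∀ (f : L2Es) (g : L2E),
      S (S (pr f g)) = pr (f + MΦ g) (ContinuousLinearMap.adjoint MΦ f + g))
    (PpE : L2E →L[ℂ] L2E) (hPpE : IsSelfAdjoint PpE) (hPpE2 : PpE ∘L PpE = PpE)
    (PpEs : L2Es →L[ℂ] L2Es) (hPpEs : IsSelfAdjoint PpEs) (hPpEs2 : PpEs ∘L PpEs = PpEs)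
    (hMΦH2 : ∀ h : L2E, PpEs (MΦ (PpE h)) = MΦ (PpE h))
    -- Δ = (I − Φ*Φ)^{1/2} on L²(E):
    (Δ : L2E →L[ℂ] L2E) (hΔ : IsSelfAdjoint Δ) (hΔpos : ∀ g, 0 ≤ (⟪Δ g, g⟫).re)
    (hΔ2 : Δ ∘L Δ = 1 - ContinuousLinearMap.adjoint MΦ ∘L MΦ)
    -- j : H²(E_*) → L²(E_*), isometric with range H²(E_*):
    (j : H2 →L[ℂ] L2Es)
    (hj : ∀ x y : H2, ⟪j x, j y⟫ = ⟪x, y⟫)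
    (hjrange : Set.range j = Set.range PpEs)
    -- D = D_{Φ*}:
    (D : H2 →L[ℂ] H2) (hD : IsSelfAdjoint D) (hDpos : ∀ x, 0 ≤ (⟪D x, x⟫).re)
    (hDj : ∀ h : H2, j (D (D h)) =
      j h - PpEs (MΦ (PpE (ContinuousLinearMap.adjoint MΦ (j h)))))
    -- P_Φ:
    (PΦ : WithLp 2 (L2Es × L2E) →L[ℂ] WithLp 2 (L2Es × L2E))
    (hPΦ : ∀ (f : L2Es) (g : L2E),
      PΦ (pr f g) = pr (PpEs f - MΦ (PpE g))
        ((g - PpE g) - ContinuousLinearMap.adjoint MΦ (f - PpEs f)))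
    -- the operator-range inner product of ℋ:
    (ipW : WithLp 2 (L2Es × L2E) → WithLp 2 (L2Es × L2E) → ℂ)
    (hipW : ∀ x y, x ∈ (LinearMap.ker (S : WithLp 2 (L2Es × L2E) →ₗ[ℂ] WithLp 2 (L2Es × L2E)))ᗮ → ipW (S x) (S y) = ⟪x, y⟫) :
    -- (1) ker V* = {(0,g) ∈ K_Φ : g ∈ (L²⊖H²(E)) ∩ ΔL²(E)}:
    (∀ p ∈ Set.range S, PpEs (c1 p) = c1 p → PpE (c2 p) = 0 →
      ((∀ h : H2, ipW p (PΦ (pr (j h) (ContinuousLinearMap.adjoint MΦ (j h)))) = 0) ↔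
        (c1 p = 0 ∧ c2 p ∈ Set.range Δ))) ∧
      -- (2) as sets, H_Φ = {f ∈ H²(E_*) : ∃ g with (f,g) ∈ K_Φ}:
      ∀ f : L2Es,
        ((∃ g : L2E, pr f g ∈ Set.range S ∧ PpEs f = f ∧ PpE g = 0) ↔
          ∃ x : H2, j (D x) = f) :=
  stmt_11_general MΦ S hS hS2 PpE hPpE hPpE2 PpEs hPpEs2 hMΦH2 Δ hΔ hΔ2 j hj hjrange D hD hDj PΦ hPΦ
    ipW hipW
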